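/- Let G be a 10-edge graph with degree sequence (5,3,3,3,3,3) in which the degree-5 vertex is adjacent to every other vertex. In any decomposition of K_16 into 12 copies of G, let A be the set of vertices of K_16 that are covered with degree multiset {5,5,5}. Then 3|A| = 12, so |A| = 4; but for any two distinct vertices a, a' ∈ A, the copy of G containing the edge aa' must assign one of a, a' a degree in {3}, contradicting that both a and a' only ever receive degree 5. Hence no such decomposition exists. -/

import Mathlib

/-!
Every vertex of `K₁₆` has degree 15, split among the copies of `G` containing it into parts
`3` and `5`, hence as `5 + 5 + 5` or `3 + 3 + 3 + 3 + 3`. Each of the 12 copies has exactly one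
vertex of degree 5, so exactly four vertices receive `5 + 5 + 5`. Two of them are joined by an
edge of some copy, where both have degree 5, which is impossible.
-/

open SimpleGraph

/-- `f` is a decomposition of `H` into `m` edge-disjoint copies of `G`. -/
def IsDecompFun {V W : Type*} (H : SimpleGraph V) (G : SimpleGraph W)
    {m : ℕ} (f : Fin m → H.Subgraph) : Prop :=
  (∀ i, Nonempty ((f i).coe ≃g G)) ∧
  ∀ e ∈ H.edgeSet, ∃! i, e ∈ SimpleGraph.Subgraph.edgeSet (f i)

open Finset

theorem SimpleGraph.card_filter_degree_eq_of_map_degree_eq {W : Type*} [Fintype W]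
    {G : SimpleGraph W} [DecidableRel G.Adj] {s : Multiset ℕ}
    (h : univ.val.map (fun x => G.degree x) = s) (k : ℕ) :
    #{x | G.degree x = k} = s.count k := by
  rw [← h, Multiset.count_map, card_def, filter_val]
  simp only [eq_comm]

theorem SimpleGraph.Subgraph.mem_verts_of_degree_ne_zero {V : Type*} {H : SimpleGraph V}
    {G' : H.Subgraph} {v : V} [Fintype (G'.neighborSet v)] (h : G'.degree v ≠ 0) :
    v ∈ G'.verts := by
  by_contra hv
  exact h (Subgraph.degree_of_notMem_verts hv)

theorem SimpleGraph.Subgraph.degree_eq_card_filter_adj {V : Type*} [Fintype V]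
    {H : SimpleGraph V} (G' : H.Subgraph) [DecidableRel G'.Adj] (v : V)
    [Fintype (G'.neighborSet v)] : G'.degree v = #{w | G'.Adj v w} := by
  rw [← Subgraph.finset_card_neighborSet_eq_degree]
  congr 1
  ext w
  simp

namespace IsDecompFun

variable {V W : Type*} {H : SimpleGraph V} {G : SimpleGraph W} {m : ℕ} {f : Fin m → H.Subgraph}

theorem card_filter_adj (hf : IsDecompFun H G f) [∀ i, DecidableRel (f i).Adj]
    [DecidableRel H.Adj] (v w : V) :
    #{i | (f i).Adj v w} = if H.Adj v w then 1 else 0 := by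
  split_ifs with h
  · obtain ⟨i, hi, huniq⟩ := hf.2 s(v, w) h
    exact card_eq_one.2 ⟨i, by ext j; simpa using ⟨fun hj => huniq j hj, fun hj => hj ▸ hi⟩⟩
  · exact card_eq_zero.2 (filter_eq_empty_iff.2 fun i _ hi => h ((f i).adj_sub hi))

section Degrees

variable [∀ i v, Fintype ((f i).neighborSet v)]

theorem sum_degree_eq [Fintype V] [DecidableRel H.Adj] (hf : IsDecompFun H G f) (v : V) :
    ∑ i, (f i).degree v = H.degree v := by
  classical
  calc ∑ i, (f i).degree v = ∑ i, ∑ w, if (f i).Adj v w then 1 else 0 := by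
        simp only [Subgraph.degree_eq_card_filter_adj, card_filter]
    _ = ∑ w, #{i | (f i).Adj v w} := by rw [sum_comm]; simp only [card_filter]
    _ = H.degree v := by
        simp only [hf.card_filter_adj, ← card_filter, ← card_neighborFinset_eq_degree]
        congr 1; ext w; simp

variable [Fintype W] [DecidableRel G.Adj]

theorem exists_iso_degree_eq (hf : IsDecompFun H G f) (i : Fin m) :
    ∃ φ : (f i).coe ≃g G, ∀ v : (f i).verts, G.degree (φ v) = (f i).degree v := by
  obtain ⟨φ⟩ := hf.1 i
  exact ⟨φ, fun v => by rw [φ.degree_eq, Subgraph.coe_degree]⟩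

theorem degree_mem_map_degree (hf : IsDecompFun H G f) (i : Fin m) {v : V}
    (hv : (f i).degree v ≠ 0) : (f i).degree v ∈ univ.val.map (fun x => G.degree x) := by
  obtain ⟨φ, hφ⟩ := hf.exists_iso_degree_eq i
  rw [← hφ ⟨v, Subgraph.mem_verts_of_degree_ne_zero hv⟩]
  exact Multiset.mem_map_of_mem _ (mem_univ _)

variable [Fintype V]

theorem card_filter_degree_eq (hf : IsDecompFun H G f) (i : Fin m) {k : ℕ} (hk : k ≠ 0) :
    #{v | (f i).degree v = k} = #{x | G.degree x = k} := by
  obtain ⟨φ, hφ⟩ := hf.exists_iso_degree_eq i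
  have hmem {v : V} (hv : v ∈ ({v | (f i).degree v = k} : Finset V)) : v ∈ (f i).verts :=
    Subgraph.mem_verts_of_degree_ne_zero ((mem_filter.1 hv).2 ▸ hk)
  refine card_bij (fun v hv => φ ⟨v, hmem hv⟩) (fun v hv => ?_) (fun v hv w hw h => ?_)
    (fun x hx => ⟨φ.symm x, ?_, by simp⟩)
  · simpa [hφ] using hv
  · exact congrArg Subtype.val (φ.injective h)
  · simpa [← hφ] using hx

theorem eq_of_degree_eq (hf : IsDecompFun H G f) {k : ℕ} (hk : k ≠ 0)
    (hG : #{x | G.degree x = k} = 1) (i : Fin m) {a b : V}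
    (ha : (f i).degree a = k) (hb : (f i).degree b = k) : a = b := by
  rw [← hf.card_filter_degree_eq i hk] at hG
  exact card_le_one.1 hG.le a (by simpa using ha) b (by simpa using hb)

theorem not_adj_of_forall_degree_eq_zero_or_eq (hf : IsDecompFun H G f) {k : ℕ} (hk : k ≠ 0)
    (hG : #{x | G.degree x = k} = 1) {a b : V}
    (ha : ∀ i, (f i).degree a = 0 ∨ (f i).degree a = k)
    (hb : ∀ i, (f i).degree b = 0 ∨ (f i).degree b = k) : ¬ H.Adj a b := by
  intro hab
  obtain ⟨i, hi, -⟩ := hf.2 s(a, b) hab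
  have hi : (f i).Adj a b := Subgraph.mem_edgeSet.1 hi
  refine hab.ne (hf.eq_of_degree_eq hk hG i ((ha i).resolve_left ?_) ((hb i).resolve_left ?_))
  · exact (Subgraph.degree_pos_iff_exists_adj.2 ⟨b, hi⟩).ne'
  · exact (Subgraph.degree_pos_iff_exists_adj.2 ⟨a, hi.symm⟩).ne'

theorem sum_card_filter_degree_eq (hf : IsDecompFun H G f) {k : ℕ} (hk : k ≠ 0) :
    ∑ v, #{i | (f i).degree v = k} = m * #{x | G.degree x = k} := by
  calc ∑ v, #{i | (f i).degree v = k} = ∑ i, #{v | (f i).degree v = k} := by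
        simp only [card_filter]; exact sum_comm
    _ = m * #{x | G.degree x = k} := by simp [hf.card_filter_degree_eq _ hk]

end Degrees

end IsDecompFun

/-- The only ways to write `15` as a sum of parts `3` and `5` are `5 + 5 + 5` and
`3 + 3 + 3 + 3 + 3`. -/
theorem card_filter_eq_five_of_sum_eq_fifteen {ι : Type*} (s : Finset ι) (d : ι → ℕ)
    (hd : ∀ i ∈ s, d i = 0 ∨ d i = 3 ∨ d i = 5) (hsum : ∑ i ∈ s, d i = 15) :
    (#{i ∈ s | d i = 5} = 3 ∧ ∀ i ∈ s, d i ≠ 3) ∨ #{i ∈ s | d i = 5} = 0 := by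
  have hsplit : ∑ i ∈ s, d i = 5 * #{i ∈ s | d i = 5} + 3 * #{i ∈ s | d i = 3} := by
    rw [card_filter, card_filter, mul_sum, mul_sum, ← sum_add_distrib]
    refine sum_congr rfl fun i hi => ?_
    rcases hd i hi with h | h | h <;> simp [h]
  have h3 : #{i ∈ s | d i = 3} = 0 → ∀ i ∈ s, d i ≠ 3 := by
    simp [filter_eq_empty_iff]
  rcases (by omega : (#{i ∈ s | d i = 5} = 3 ∧ #{i ∈ s | d i = 3} = 0) ∨ #{i ∈ s | d i = 5} = 0)
    with ⟨h5, h0⟩ | h0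
  · exact Or.inl ⟨h5, h3 h0⟩
  · exact Or.inr h0

theorem stmt_18_general (G : SimpleGraph (Fin 6)) [DecidableRel G.Adj]
    (hdeg : (Finset.univ.val.map (fun x => G.degree x) : Multiset ℕ) = {5, 3, 3, 3, 3, 3}) :
    ¬ ∃ f : Fin 12 → (⊤ : SimpleGraph (Fin 16)).Subgraph,
        IsDecompFun (⊤ : SimpleGraph (Fin 16)) G f := by
  classical
  rintro ⟨f, hf⟩
  have hG5 : #{x | G.degree x = 5} = 1 := by simp [card_filter_degree_eq_of_map_degree_eq hdeg]
  have hval (i : Fin 12) (v : Fin 16) :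
      (f i).degree v = 0 ∨ (f i).degree v = 3 ∨ (f i).degree v = 5 := by
    refine or_iff_not_imp_left.2 fun h => ?_
    have := hdeg ▸ hf.degree_mem_map_degree i h
    simp only [Multiset.insert_eq_cons, Multiset.mem_cons, Multiset.mem_singleton] at this
    omega
  have htype (v : Fin 16) := card_filter_eq_five_of_sum_eq_fifteen univ (fun i => (f i).degree v)
    (fun i _ => hval i v) (by rw [hf.sum_degree_eq]; simp)
  set A : Finset (Fin 16) := {v | #{i | (f i).degree v = 5} = 3}
  have hA : 3 * #A = 12 := by
    calc 3 * #A = ∑ v ∈ A, #{i | (f i).degree v = 5} := by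
          rw [sum_congr rfl fun v hv => (mem_filter.1 hv).2, sum_const, smul_eq_mul, mul_comm]
      _ = ∑ v, #{i | (f i).degree v = 5} :=
          sum_filter_of_ne fun v _ h => ((htype v).resolve_right h).1
      _ = 12 := by rw [hf.sum_card_filter_degree_eq (by norm_num), hG5]
  have hA5 {v : Fin 16} (hv : v ∈ A) (i : Fin 12) : (f i).degree v = 0 ∨ (f i).degree v = 5 := by
    have hno3 := ((htype v).resolve_right ((mem_filter.1 hv).2 ▸ three_ne_zero)).2 i (mem_univ i)
    have := hval i v
    omega
  obtain ⟨a, ha, b, hb, hab⟩ := one_lt_card.1 (by omega : 1 < #A)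
  exact hf.not_adj_of_forall_degree_eq_zero_or_eq (by norm_num) hG5 (hA5 ha) (hA5 hb)
    ((top_adj a b).2 hab)

/-- Let `G` be a 10-edge graph with degree sequence `(5,3,3,3,3,3)` in which the
degree-5 vertex is adjacent to every other vertex.  Then there is no decomposition
of `K_16` into 12 copies of `G`. -/
theorem stmt_18 (G : SimpleGraph (Fin 6)) [DecidableRel G.Adj]
    (hedges : G.edgeFinset.card = 10)
    (hdeg : (Finset.univ.val.map (fun x => G.degree x) : Multiset ℕ) = {5, 3, 3, 3, 3, 3})
    (hadj : ∀ x : Fin 6, G.degree x = 5 → ∀ y : Fin 6, y ≠ x → G.Adj x y) :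
    ¬ ∃ f : Fin 12 → (⊤ : SimpleGraph (Fin 16)).Subgraph,
        IsDecompFun (⊤ : SimpleGraph (Fin 16)) G f :=
  stmt_18_general G hdeg
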